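/- Let n ≥ 1 be an integer, α ∈ (0,1), η > 0, T ≥ 1, and m ≥ 1. Let p⁰ ∈ A_α, let û⁰,…,û^{T−1} ∈ ℝ^n satisfy û^t_i ≤ 0 for all t and i, and for t = 0,…,T−1 let p^{t+1} be a minimizer of q ↦ −η·⟨q, û^t⟩ + D(q‖p^t) over A_α. Let 0 = t₁ < t₂ < … < t_m < t_{m+1} = T be any partition of {0,…,T−1} into m blocks and let p^{(1)},…,p^{(m)} ∈ A_α be arbitrary comparators. Then Σ_{j=1}^m Σ_{t=t_j}^{t_{j+1}−1} ⟨p^{(j)} − p^t, û^t⟩ ≤ m·log(n/α)/η + (η/2)·Σ_{t=0}^{T−1} Σ_{i=1}^n p^t_i·(û^t_i)². -/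

import Mathlib

/-! The iterates are entropic mirror descent steps on `A_α`. First-order optimality of a step and
the three-point identity for `D` give, for every comparator `q ∈ A_α`,
`η ⟨q - pᵗ, ûᵗ⟩ ≤ D(q‖pᵗ) - D(q‖pᵗ⁺¹) + (η²/2) ∑ᵢ pᵗᵢ (ûᵗᵢ)²`,
the quadratic term coming from `exp c ≤ 1 + c + c²/2` for `c = η ûᵗᵢ ≤ 0`. Within one block of the
partition the divergences telescope, and `0 ≤ D(q‖p) ≤ log (n/α)` on `A_α`, so each of the `m`
blocks costs at most `log (n/α) / η`. -/

open Finset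

/-- Unnormalized negative-entropy Bregman divergence
`D(x‖y) = ∑ i, (x i * log (x i / y i) - x i + y i)` (with `0·log 0 = 0`,
which holds automatically since `Real.log 0 = 0`). -/
noncomputable def breg {n : ℕ} (x y : Fin n → ℝ) : ℝ :=
  ∑ i, (x i * Real.log (x i / y i) - x i + y i)

/-- The clipped simplex `A_α = {x : ∑ i, x i = 1 ∧ ∀ i, x i ≥ α / n}`. -/
def clippedSimplex (n : ℕ) (α : ℝ) : Set (Fin n → ℝ) :=
  {x | (∑ i, x i) = 1 ∧ ∀ i, α / n ≤ x i}

open Real Filter Topology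

theorem Real.exp_le_one_add_add_sq_div_two {c : ℝ} (hc : c ≤ 0) : exp c ≤ 1 + c + c ^ 2 / 2 := by
  have hg : ∀ x, HasDerivAt (fun x ↦ 1 + x + x ^ 2 / 2 - exp x) (1 + x - exp x) x := fun x ↦ by
    simpa using (((hasDerivAt_id x).const_add 1).fun_add ((hasDerivAt_pow 2 x).div_const 2)).fun_sub
      (hasDerivAt_exp x)
  have hanti := antitone_of_deriv_nonpos (fun x ↦ (hg x).differentiableAt)
    fun x ↦ by rw [(hg x).deriv]; linarith [add_one_le_exp x]
  have := hanti hc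
  simp only [exp_zero] at this
  linarith

section Scalar

variable {a b c : ℝ}

theorem mul_log_div_sub_add_le_sq_div (ha : 0 ≤ a) (hb : 0 < b) :
    a * log (a / b) - a + b ≤ (a - b) ^ 2 / b := by
  calc a * log (a / b) - a + b ≤ a * (a / b - 1) - a + b := by
        rcases ha.eq_or_lt with rfl | ha
        · simp
        gcongr
        exact log_le_sub_one_of_pos (by positivity)
    _ = (a - b) ^ 2 / b := by field_simp; ring

theorem mul_sub_sub_le_mul_exp_sub (ha : 0 ≤ a) (hb : 0 < b) :
    c * (a - b) - (a * log (a / b) - a + b) ≤ b * (exp c - 1 - c) := by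
  suffices a * (c - log (a / b)) ≤ b * exp c - a by linarith
  rcases ha.eq_or_lt with rfl | ha
  · simp only [zero_div, log_zero, sub_zero, zero_mul]; positivity
  have hlog : log (b * exp c / a) = c - log (a / b) := by
    rw [log_div (by positivity) ha.ne', log_mul hb.ne' (exp_pos c).ne', log_exp,
      log_div ha.ne' hb.ne']
    ring
  calc a * (c - log (a / b)) ≤ a * (b * exp c / a - 1) := by
        rw [← hlog]; gcongr; exact log_le_sub_one_of_pos (by positivity)
    _ = b * exp c - a := by field_simp

theorem mul_log_div_three_point (hb : b ≠ 0) (hc : c ≠ 0) :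
    a * log (a / c) - a + c =
      (a * log (a / b) - a + b) + (b * log (b / c) - b + c) + (a - b) * (log b - log c) := by
  rcases eq_or_ne a 0 with rfl | ha
  · rw [log_div hb hc]; ring
  rw [log_div ha hc, log_div ha hb, log_div hb hc]
  ring

end Scalar

section Divergence

variable {n : ℕ} {x y r : Fin n → ℝ}

theorem breg_nonneg (hx : ∀ i, 0 ≤ x i) (hy : ∀ i, 0 < y i) : 0 ≤ breg x y := by
  refine sum_nonneg fun i _ ↦ ?_
  have hkl := mul_nonneg (hy i).le (InformationTheory.klFun_nonneg (div_nonneg (hx i) (hy i).le))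
  rw [InformationTheory.klFun_apply] at hkl
  have := (hy i).ne'
  convert hkl using 1
  field_simp
  ring

theorem breg_le_sum_sq_div (hx : ∀ i, 0 ≤ x i) (hy : ∀ i, 0 < y i) :
    breg x y ≤ ∑ i, (x i - y i) ^ 2 / y i :=
  sum_le_sum fun i _ ↦ mul_log_div_sub_add_le_sq_div (hx i) (hy i)

theorem breg_three_point (hx : ∀ i, x i ≠ 0) (hy : ∀ i, y i ≠ 0) :
    breg r y = breg r x + breg x y + ∑ i, (r i - x i) * (log (x i) - log (y i)) := by
  simp only [breg, ← sum_add_distrib]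
  exact sum_congr rfl fun i _ ↦ mul_log_div_three_point (hx i) (hy i)

theorem mul_sum_sub_mul_sub_breg_le {η : ℝ} {u : Fin n → ℝ} (hη : 0 ≤ η) (hu : ∀ i, u i ≤ 0)
    (hx : ∀ i, 0 ≤ x i) (hy : ∀ i, 0 < y i) :
    η * ∑ i, (x i - y i) * u i - breg x y ≤ η ^ 2 / 2 * ∑ i, y i * u i ^ 2 := by
  rw [mul_sum, mul_sum, breg, ← sum_sub_distrib]
  refine sum_le_sum fun i _ ↦ ?_
  have hc : η * u i ≤ 0 := mul_nonpos_of_nonneg_of_nonpos hη (hu i)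
  calc η * ((x i - y i) * u i) - (x i * log (x i / y i) - x i + y i)
      ≤ y i * (exp (η * u i) - 1 - η * u i) := by
        convert mul_sub_sub_le_mul_exp_sub (c := η * u i) (hx i) (hy i) using 2; ring
    _ ≤ y i * ((η * u i) ^ 2 / 2) :=
        mul_le_mul_of_nonneg_left (by linarith [exp_le_one_add_add_sq_div_two hc]) (hy i).le
    _ = η ^ 2 / 2 * (y i * u i ^ 2) := by ring

end Divergence

section ClippedSimplex

variable {n : ℕ} {α : ℝ} {x y : Fin n → ℝ}

theorem pos_of_mem_clippedSimplex (hα : 0 < α) (hx : x ∈ clippedSimplex n α) (i : Fin n) :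
    0 < x i :=
  (div_pos hα (Nat.cast_pos.2 i.pos)).trans_le (hx.2 i)

theorem convex_clippedSimplex : Convex ℝ (clippedSimplex n α) := by
  intro x hx y hy a b ha hb hab
  refine ⟨?_, fun i ↦ ?_⟩
  · simp [sum_add_distrib, ← mul_sum, hx.1, hy.1, hab]
  · calc α / n = a * (α / n) + b * (α / n) := by rw [← add_mul, hab, one_mul]
      _ ≤ a * x i + b * y i := by gcongr <;> simp only [hx.2, hy.2]

theorem breg_le_log_div (hα : 0 < α) (hx : x ∈ clippedSimplex n α) (hy : y ∈ clippedSimplex n α) :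
    breg x y ≤ log (n / α) := by
  have hx0 := pos_of_mem_clippedSimplex hα hx
  have hy0 := pos_of_mem_clippedSimplex hα hy
  have hbreg : breg x y = ∑ i, x i * log (x i / y i) := by
    simp only [breg, sum_add_distrib, sum_sub_distrib, hx.1, hy.1, sub_add_cancel]
  rw [hbreg, ← one_mul (log _), ← hx.1, sum_mul]
  refine sum_le_sum fun i _ ↦ mul_le_mul_of_nonneg_left ?_ (hx0 i).le
  have hx1 : x i ≤ 1 := hx.1 ▸ single_le_sum (fun j _ ↦ (hx0 j).le) (mem_univ i)
  calc log (x i / y i) ≤ log (1 / (α / n)) := by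
        gcongr
        · exact div_pos (hx0 i) (hy0 i)
        · exact div_pos hα (Nat.cast_pos.2 i.pos)
        · exact hy.2 i
    _ = log (n / α) := by rw [one_div_div]

end ClippedSimplex

section MirrorStep

variable {n : ℕ} {α η : ℝ} {u x y q : Fin n → ℝ}

theorem mul_sum_sub_mul_le_of_isMinOn (hα : 0 < α) (hx : x ∈ clippedSimplex n α)
    (hy : ∀ i, 0 < y i) (hq : q ∈ clippedSimplex n α)
    (hmin : IsMinOn (fun r ↦ -η * ∑ i, r i * u i + breg r y) (clippedSimplex n α) x) :
    η * ∑ i, (q i - x i) * u i ≤ ∑ i, (q i - x i) * (log (x i) - log (y i)) := by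
  have hx0 := pos_of_mem_clippedSimplex hα hx
  set G := ∑ i, (q i - x i) * (log (x i) - log (y i))
  set C := ∑ i, (q i - x i) ^ 2 / x i
  -- Along the segment from `x` towards `q`, minimality and the three-point identity leave only the
  -- remainder `D(r‖x) ≤ s² C`; dividing by `s` and letting `s → 0⁺` gives the first-order condition.
  have hbound : ∀ s ∈ Set.Ioc (0 : ℝ) 1, η * ∑ i, (q i - x i) * u i ≤ G + s * C := by
    rintro s ⟨hs0, hs1⟩
    set r := x + s • (q - x)
    have hr : r ∈ clippedSimplex n α :=
      convex_clippedSimplex.add_smul_sub_mem hx hq ⟨hs0.le, hs1⟩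
    have hri : ∀ i, r i = x i + s * (q i - x i) := fun i ↦ rfl
    have hsplit : breg r y = breg r x + breg x y + s * G := by
      rw [breg_three_point (fun i ↦ (hx0 i).ne') (fun i ↦ (hy i).ne'), mul_sum]
      congr 1
      exact sum_congr rfl fun i _ ↦ by rw [hri]; ring
    have hrx : breg r x ≤ s ^ 2 * C := by
      refine (breg_le_sum_sq_div (fun i ↦ (pos_of_mem_clippedSimplex hα hr i).le) hx0).trans_eq ?_
      rw [mul_sum]
      exact sum_congr rfl fun i _ ↦ by rw [hri]; ring
    have hlin : ∑ i, r i * u i = ∑ i, x i * u i + s * ∑ i, (q i - x i) * u i := by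
      rw [mul_sum, ← sum_add_distrib]
      exact sum_congr rfl fun i _ ↦ by rw [hri]; ring
    have hxr := isMinOn_iff.1 hmin r hr
    simp only [hsplit, hlin] at hxr
    have : s * (η * ∑ i, (q i - x i) * u i) ≤ s * (G + s * C) := by nlinarith
    exact le_of_mul_le_mul_left this hs0
  have hlim : Tendsto (fun s : ℝ ↦ G + s * C) (𝓝[>] 0) (𝓝 G) := by
    refine tendsto_nhdsWithin_of_tendsto_nhds ?_
    simpa using ((continuous_mul_const C).const_add G).tendsto (0 : ℝ)
  exact ge_of_tendsto hlim (eventually_of_mem (Ioc_mem_nhdsGT zero_lt_one) hbound)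

theorem mirror_step_regret (hα : 0 < α) (hη : 0 ≤ η) (hu : ∀ i, u i ≤ 0)
    (hx : x ∈ clippedSimplex n α) (hy : ∀ i, 0 < y i) (hq : q ∈ clippedSimplex n α)
    (hmin : IsMinOn (fun r ↦ -η * ∑ i, r i * u i + breg r y) (clippedSimplex n α) x) :
    η * ∑ i, (q i - y i) * u i ≤ breg q y - breg q x + η ^ 2 / 2 * ∑ i, y i * u i ^ 2 := by
  have hx0 := pos_of_mem_clippedSimplex hα hx
  have hopt := mul_sum_sub_mul_le_of_isMinOn hα hx hy hq hmin
  have hthree := breg_three_point (r := q) (fun i ↦ (hx0 i).ne') (fun i ↦ (hy i).ne')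
  have hquad := mul_sum_sub_mul_sub_breg_le hη hu (fun i ↦ (hx0 i).le) hy
  have hsplit : ∑ i, (q i - y i) * u i = ∑ i, (q i - x i) * u i + ∑ i, (x i - y i) * u i := by
    rw [← sum_add_distrib]
    exact sum_congr rfl fun i _ ↦ by ring
  rw [hsplit, mul_add]
  linarith

end MirrorStep

theorem sum_sum_Ico_castSucc_succ {M : Type*} [AddCommMonoid M] (f : ℕ → M) :
    ∀ {m : ℕ} (ts : Fin (m + 1) → ℕ), Monotone ts →
      ∑ j : Fin m, ∑ t ∈ Ico (ts j.castSucc) (ts j.succ), f t =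
        ∑ t ∈ Ico (ts 0) (ts (Fin.last m)), f t
  | 0, _, _ => by simp
  | m + 1, ts, hts => by
    have ih := sum_sum_Ico_castSucc_succ f (ts ∘ Fin.castSucc)
      (hts.comp Fin.strictMono_castSucc.monotone)
    simp only [Function.comp_apply, ← Fin.succ_castSucc, Fin.castSucc_zero] at ih
    rw [Fin.sum_univ_castSucc, ih, Fin.succ_last]
    exact sum_Ico_consecutive f (hts (Fin.zero_le _)) (hts (Fin.castSucc_le_succ _))

theorem block_regret_le {n : ℕ} {α η : ℝ} {p u : ℕ → Fin n → ℝ} {q : Fin n → ℝ} {a b : ℕ}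
    (hα : 0 < α) (hη : 0 < η) (hu : ∀ t i, u t i ≤ 0) (hab : a ≤ b)
    (hp : ∀ t ≤ b, p t ∈ clippedSimplex n α)
    (hstep : ∀ t < b, IsMinOn (fun r ↦ -η * ∑ i, r i * u t i + breg r (p t))
      (clippedSimplex n α) (p (t + 1)))
    (hq : q ∈ clippedSimplex n α) :
    ∑ t ∈ Ico a b, ∑ i, (q i - p t i) * u t i ≤
      log (n / α) / η + η / 2 * ∑ t ∈ Ico a b, ∑ i, p t i * u t i ^ 2 := by
  have htelescope : ∑ t ∈ Ico a b, (breg q (p t) - breg q (p (t + 1))) =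
      breg q (p a) - breg q (p b) := by
    rw [← neg_sub, ← sum_Ico_sub (fun t ↦ breg q (p t)) hab, ← sum_neg_distrib]
    simp only [neg_sub]
  have hregret : η * ∑ t ∈ Ico a b, ∑ i, (q i - p t i) * u t i ≤
      breg q (p a) - breg q (p b) + η ^ 2 / 2 * ∑ t ∈ Ico a b, ∑ i, p t i * u t i ^ 2 := by
    rw [← htelescope, mul_sum, mul_sum, ← sum_add_distrib]
    refine sum_le_sum fun t ht ↦ ?_
    have htb := (mem_Ico.1 ht).2
    exact mirror_step_regret hα hη.le (hu t) (hp _ htb)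
      (pos_of_mem_clippedSimplex hα (hp t htb.le)) hq (hstep t htb)
  have hstart := breg_le_log_div hα hq (hp a hab)
  have hend := breg_nonneg (fun i ↦ (pos_of_mem_clippedSimplex hα hq i).le)
    (pos_of_mem_clippedSimplex hα (hp b le_rfl))
  rw [← mul_le_mul_iff_of_pos_left hη, mul_add, mul_div_cancel₀ _ hη.ne']
  linarith

theorem stmt_12_general (n : ℕ) (α η : ℝ) (hα : 0 < α ∧ α < 1) (hη : 0 < η)
    (T m : ℕ)
    (p : ℕ → Fin n → ℝ) (hp0 : p 0 ∈ clippedSimplex n α)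
    (u : ℕ → Fin n → ℝ) (hu : ∀ t i, u t i ≤ 0)
    (hmin : ∀ t < T, p (t + 1) ∈ clippedSimplex n α ∧
      ∀ q ∈ clippedSimplex n α,
        -η * (∑ i, p (t + 1) i * u t i) + breg (p (t + 1)) (p t) ≤
          -η * (∑ i, q i * u t i) + breg q (p t))
    (ts : Fin (m + 1) → ℕ) (hts0 : ts 0 = 0) (htsT : ts (Fin.last m) = T)
    (htsmono : StrictMono ts)
    (pc : Fin m → Fin n → ℝ) (hpc : ∀ j, pc j ∈ clippedSimplex n α) :
    ∑ j : Fin m, ∑ t ∈ Finset.Ico (ts j.castSucc) (ts j.succ),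
        ∑ i, (pc j i - p t i) * u t i ≤
      m * Real.log (n / α) / η + η / 2 * ∑ t ∈ Finset.range T, ∑ i, p t i * u t i ^ 2 := by
  have hp : ∀ t ≤ T, p t ∈ clippedSimplex n α
    | 0, _ => hp0
    | t + 1, ht => (hmin t ht).1
  have hts := htsmono.monotone
  have hsuccT (j : Fin m) : ts j.succ ≤ T := htsT ▸ hts (Fin.le_last _)
  calc _ ≤ ∑ j : Fin m, (log (n / α) / η +
          η / 2 * ∑ t ∈ Ico (ts j.castSucc) (ts j.succ), ∑ i, p t i * u t i ^ 2) :=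
        sum_le_sum fun j _ ↦ block_regret_le hα.1 hη hu (hts (Fin.castSucc_le_succ j))
          (fun t ht ↦ hp t (ht.trans (hsuccT j)))
          (fun t ht ↦ isMinOn_iff.2 (hmin t (ht.trans_le (hsuccT j))).2) (hpc j)
    _ = _ := by
        rw [sum_add_distrib, ← mul_sum, sum_sum_Ico_castSucc_succ _ ts hts, hts0, htsT,
          range_eq_Ico, sum_const, card_univ, Fintype.card_fin, nsmul_eq_mul, mul_div_assoc]

theorem stmt_12 (n : ℕ) (hn : 1 ≤ n) (α η : ℝ) (hα : 0 < α ∧ α < 1) (hη : 0 < η)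
    (T m : ℕ) (hT : 1 ≤ T) (hm : 1 ≤ m)
    (p : ℕ → Fin n → ℝ) (hp0 : p 0 ∈ clippedSimplex n α)
    (u : ℕ → Fin n → ℝ) (hu : ∀ t i, u t i ≤ 0)
    (hmin : ∀ t < T, p (t + 1) ∈ clippedSimplex n α ∧
      ∀ q ∈ clippedSimplex n α,
        -η * (∑ i, p (t + 1) i * u t i) + breg (p (t + 1)) (p t) ≤
          -η * (∑ i, q i * u t i) + breg q (p t))
    (ts : Fin (m + 1) → ℕ) (hts0 : ts 0 = 0) (htsT : ts (Fin.last m) = T)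
    (htsmono : StrictMono ts)
    (pc : Fin m → Fin n → ℝ) (hpc : ∀ j, pc j ∈ clippedSimplex n α) :
    ∑ j : Fin m, ∑ t ∈ Finset.Ico (ts j.castSucc) (ts j.succ),
        ∑ i, (pc j i - p t i) * u t i ≤
      m * Real.log (n / α) / η + η / 2 * ∑ t ∈ Finset.range T, ∑ i, p t i * u t i ^ 2 :=
  stmt_12_general n α η hα hη T m p hp0 u hu hmin ts hts0 htsT htsmono pc hpc
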